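/- arXiv:1311.5481 — 3 statements merged into one kernel-verified Lean document; each statement's English description precedes it below -/
import Mathlib

section
/- Let U be a finite set and let 𝓛 be a laminar family of subsets of U such that every member of 𝓛 has odd cardinality at least 3. Then |𝓛| ≤ ⌊(|U| − 1)/2⌋. -/
/-- A family of finite sets is laminar if any two members are nested or disjoint. -/
def Laminar {α : Type*} (𝓛 : Finset (Finset α)) : Prop :=
  ∀ S ∈ 𝓛, ∀ T ∈ 𝓛, S ⊆ T ∨ T ⊆ S ∨ Disjoint S T

/-!
The maximal members of a laminar family are pairwise disjoint and every member lies below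
exactly one of them, so the family splits into the subfamilies below its maximal members.
By strong induction on `T ∈ 𝓛`, at most `(|T| - 1)/2` members are contained in `T`: if `T`
has `k` maximal proper submembers `r₁, …, rₖ`, induction gives
`2 · #{S ∈ 𝓛 | S ⊂ T} + k ≤ ∑ |rᵢ| ≤ |T|`, and `∑ |rᵢ| ≡ k (mod 2)` by oddness; since `|T|` is
odd this leaves room for `T` itself when `k ≥ 2`; for `k = 1` the room comes from `r₁ ⊊ T`,
and for `k = 0` from `|T| ≥ 3`.
Summing the same bound over the maximal members of `𝓛` gives the theorem.
-/

open Finset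

section

variable {α : Type*}

lemma Laminar.mono {𝓛 𝓕 : Finset (Finset α)} (h : Laminar 𝓛) (h𝓕 : 𝓕 ⊆ 𝓛) : Laminar 𝓕 :=
  fun S hS T hT => h S (h𝓕 hS) T (h𝓕 hT)

lemma sum_card_add_three_le_card_add_card {M : Finset (Finset α)} {T : Finset α}
    (hM : ∀ r ∈ M, Odd r.card ∧ r ⊂ T) (hT : Odd T.card) (hT₃ : 3 ≤ T.card)
    (hsum_le : ∑ r ∈ M, r.card ≤ T.card) :
    ∑ r ∈ M, r.card + 3 ≤ T.card + #M := by
  have hparity : Even (∑ r ∈ M, r.card) ↔ Even #M := by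
    rw [even_sum_iff_even_card_odd, filter_true_of_mem fun r hr => (hM r hr).1]
  obtain ⟨m, hm⟩ := Nat.even_add.2 hparity
  obtain ⟨t, ht⟩ := hT
  obtain hM₀ | hM₁ | hM₂ : #M = 0 ∨ #M = 1 ∨ 2 ≤ #M := by omega
  · rw [card_eq_zero.1 hM₀, sum_empty, card_empty]
    omega
  · obtain ⟨r, rfl⟩ := card_eq_one.1 hM₁
    have := card_lt_card (hM r (mem_singleton_self r)).2
    rw [sum_singleton] at hm ⊢
    omega
  · omega

variable [DecidableEq α]

def maximalMembers (𝓕 : Finset (Finset α)) : Finset (Finset α) :=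
  {S ∈ 𝓕 | ∀ T ∈ 𝓕, S ⊆ T → S = T}

lemma mem_maximalMembers {𝓕 : Finset (Finset α)} {S : Finset α} :
    S ∈ maximalMembers 𝓕 ↔ S ∈ 𝓕 ∧ ∀ T ∈ 𝓕, S ⊆ T → S = T :=
  mem_filter

lemma maximalMembers_subset (𝓕 : Finset (Finset α)) : maximalMembers 𝓕 ⊆ 𝓕 :=
  filter_subset _ _

lemma exists_mem_maximalMembers_superset {𝓕 : Finset (Finset α)} {S : Finset α}
    (hS : S ∈ 𝓕) : ∃ r ∈ maximalMembers 𝓕, S ⊆ r := by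
  obtain ⟨r, hSr, hr⟩ := 𝓕.exists_le_maximal hS
  exact ⟨r, mem_maximalMembers.2 ⟨hr.1, fun T hT hrT => le_antisymm hrT (hr.2 hT hrT)⟩, hSr⟩

lemma filter_subset_eq_insert_filter_ssubset {𝓛 : Finset (Finset α)} {T : Finset α}
    (hT : T ∈ 𝓛) : {S ∈ 𝓛 | S ⊆ T} = insert T {S ∈ 𝓛 | S ⊂ T} := by
  ext S
  simp only [mem_filter, mem_insert, subset_iff_ssubset_or_eq]
  grind

namespace Laminar

variable {𝓛 𝓕 : Finset (Finset α)}

lemma pairwiseDisjoint_maximalMembers (h : Laminar 𝓕) :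
    (maximalMembers 𝓕 : Set (Finset α)).PairwiseDisjoint id := by
  intro r₁ h₁ r₂ h₂ hne
  rw [mem_coe, mem_maximalMembers] at h₁ h₂
  rcases h r₁ h₁.1 r₂ h₂.1 with h₁₂ | h₂₁ | hdisj
  · exact absurd (h₁.2 r₂ h₂.1 h₁₂) hne
  · exact absurd (h₂.2 r₁ h₁.1 h₂₁).symm hne
  · exact hdisj

lemma sum_card_maximalMembers_le (h : Laminar 𝓕) {V : Finset α} (hV : ∀ S ∈ 𝓕, S ⊆ V) :
    ∑ r ∈ maximalMembers 𝓕, r.card ≤ V.card :=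
  calc ∑ r ∈ maximalMembers 𝓕, r.card = #((maximalMembers 𝓕).biUnion id) :=
        (card_biUnion h.pairwiseDisjoint_maximalMembers).symm
    _ ≤ V.card := card_le_card (biUnion_subset.2 fun r hr => hV r (maximalMembers_subset 𝓕 hr))

lemma card_eq_sum_card_filter_subset_maximalMembers (h : Laminar 𝓕)
    (hne : ∀ S ∈ 𝓕, S.Nonempty) :
    #𝓕 = ∑ r ∈ maximalMembers 𝓕, #{S ∈ 𝓕 | S ⊆ r} := by
  rw [← card_biUnion]
  · congr 1
    ext S
    simp only [mem_biUnion, mem_filter]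
    constructor
    · intro hS
      obtain ⟨r, hr, hSr⟩ := exists_mem_maximalMembers_superset hS
      exact ⟨r, hr, hS, hSr⟩
    · rintro ⟨-, -, hS, -⟩
      exact hS
  · intro r₁ h₁ r₂ h₂ hne₁₂
    simp only [Function.onFun, disjoint_left, mem_filter]
    rintro S ⟨hS, hS₁⟩ ⟨-, hS₂⟩
    obtain ⟨x, hx⟩ := hne S hS
    exact disjoint_left.1 (h.pairwiseDisjoint_maximalMembers h₁ h₂ hne₁₂) (hS₁ hx) (hS₂ hx)

lemma two_mul_card_add_card_maximalMembers_le (h : Laminar 𝓕) (hne : ∀ S ∈ 𝓕, S.Nonempty)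
    (hbound : ∀ r ∈ maximalMembers 𝓕, 2 * #{S ∈ 𝓕 | S ⊆ r} + 1 ≤ r.card) :
    2 * #𝓕 + #(maximalMembers 𝓕) ≤ ∑ r ∈ maximalMembers 𝓕, r.card :=
  calc 2 * #𝓕 + #(maximalMembers 𝓕)
      = ∑ r ∈ maximalMembers 𝓕, (2 * #{S ∈ 𝓕 | S ⊆ r} + 1) := by
        rw [sum_add_distrib, ← mul_sum, ← h.card_eq_sum_card_filter_subset_maximalMembers hne,
          card_eq_sum_ones (maximalMembers 𝓕)]
    _ ≤ ∑ r ∈ maximalMembers 𝓕, r.card := sum_le_sum hbound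

theorem two_mul_card_filter_subset_add_one_le (hlam : Laminar 𝓛)
    (hodd : ∀ S ∈ 𝓛, Odd S.card) (hthree : ∀ S ∈ 𝓛, 3 ≤ S.card) {T : Finset α}
    (hT : T ∈ 𝓛) : 2 * #{S ∈ 𝓛 | S ⊆ T} + 1 ≤ T.card := by
  induction T using Finset.strongInduction with
  | H T ih =>
  rw [filter_subset_eq_insert_filter_ssubset hT]
  set 𝓕 := {S ∈ 𝓛 | S ⊂ T}
  have h𝓕 : 𝓕 ⊆ 𝓛 := filter_subset _ _
  have hM : ∀ r ∈ maximalMembers 𝓕, r ∈ 𝓛 ∧ r ⊂ T := fun r hr =>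
    mem_filter.1 (maximalMembers_subset 𝓕 hr)
  have hbound : 2 * #𝓕 + #(maximalMembers 𝓕) ≤ ∑ r ∈ maximalMembers 𝓕, r.card := by
    refine (hlam.mono h𝓕).two_mul_card_add_card_maximalMembers_le
      (fun S hS => card_pos.1 (by linarith [hthree S (h𝓕 hS)])) fun r hr => ?_
    have hbelow : {S ∈ 𝓕 | S ⊆ r} = {S ∈ 𝓛 | S ⊆ r} := by
      rw [filter_filter]
      exact filter_congr fun S _ => and_iff_right_of_imp fun hSr => hSr.trans_ssubset (hM r hr).2
    rw [hbelow]
    exact ih r (hM r hr).2 (hM r hr).1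
  have hsum_le : ∑ r ∈ maximalMembers 𝓕, r.card ≤ T.card :=
    (hlam.mono h𝓕).sum_card_maximalMembers_le fun S hS => (mem_filter.1 hS).2.subset
  have hroom := sum_card_add_three_le_card_add_card
    (fun r hr => ⟨hodd r (hM r hr).1, (hM r hr).2⟩) (hodd T hT) (hthree T hT) hsum_le
  rw [card_insert_of_notMem fun h => (mem_filter.1 h).2.ne rfl]
  omega

end Laminar

end

/-- A laminar family of odd-cardinality subsets of a finite universe `U`, each of
cardinality at least 3, has at most `⌊(|U| - 1)/2⌋` members. -/
theorem laminar_family_card_le {α : Type*} [DecidableEq α]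
    (U : Finset α) (𝓛 : Finset (Finset α))
    (hsub : ∀ S ∈ 𝓛, S ⊆ U)
    (hlam : Laminar 𝓛)
    (hodd : ∀ S ∈ 𝓛, Odd S.card)
    (hthree : ∀ S ∈ 𝓛, 3 ≤ S.card) :
    𝓛.card ≤ (U.card - 1) / 2 := by
  rcases 𝓛.eq_empty_or_nonempty with rfl | ⟨S, hS⟩
  · simp
  have hbound := hlam.two_mul_card_add_card_maximalMembers_le
    (fun S hS => card_pos.1 (by linarith [hthree S hS])) fun r hr =>
      hlam.two_mul_card_filter_subset_add_one_le hodd hthree (maximalMembers_subset 𝓛 hr)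
  have hsum_le := hlam.sum_card_maximalMembers_le hsub
  obtain ⟨r, hr, -⟩ := exists_mem_maximalMembers_superset hS
  have hroot : 0 < #(maximalMembers 𝓛) := card_pos.2 ⟨r, hr⟩
  rw [Nat.le_div_iff_mul_le two_pos]
  omega
end

section
/- The subset system associated with the Bounded Color Matching problem — ground set E and family 𝓛 = { M ⊆ E : M is a matching and |M ∩ E_j| ≤ w_j for every color j } — is closed under taking subsets and is 3-extendible. -/
/-! The Bounded Color Matching system is the intersection of three subset systems: the subsets
of the edge set, which is 0-extendible; the matchings, which are 2-extendible because adding an edge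
`s(a, b)` to a matching `Y` only conflicts with the at most two edges of `Y` at `a` or `b`; and
the color-bounded sets (a partition matroid), which are 1-extendible because a color class that
is full in `Y` but not in `X` has an edge of `Y \ X` to drop. All three are closed under
subsets, and for such systems extendibility constants add up under intersection: drop `Y₁` for
the first system, then, inside `Y \ Y₁` (still in the second system), drop `Y₂` for the second. -/

/-- A set of edges (as unordered pairs) is a matching if its edges are pairwise
vertex-disjoint. -/
def IsMatchingSet {V : Type*} (M : Finset (Sym2 V)) : Prop :=
  ∀ e ∈ M, ∀ f ∈ M, e ≠ f → ∀ v : V, v ∈ e → v ∉ f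

open Finset

def IsExtendible {α : Type*} [DecidableEq α] (ℓ : ℕ) (P : Finset α → Prop) : Prop :=
  ∀ X, P X → ∀ x ∉ X, P (insert x X) → ∀ Y, P Y → X ⊆ Y →
    ∃ Y' ⊆ Y \ X, #Y' ≤ ℓ ∧ P (insert x (Y \ Y'))

section Extendible

variable {α : Type*} [DecidableEq α]

theorem IsExtendible.and {P Q : Finset α → Prop} {ℓ₁ ℓ₂ : ℕ}
    (hP : IsLowerSet {M | P M}) (hQ : IsLowerSet {M | Q M})
    (hPe : IsExtendible ℓ₁ P) (hQe : IsExtendible ℓ₂ Q) :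
    IsExtendible (ℓ₁ + ℓ₂) (fun M => P M ∧ Q M) := by
  rintro X ⟨hPX, hQX⟩ x hx ⟨hPxX, hQxX⟩ Y ⟨hPY, hQY⟩ hXY
  obtain ⟨Y₁, hY₁, hcard₁, hP₁⟩ := hPe X hPX x hx hPxX Y hPY hXY
  have hXY₁ : X ⊆ Y \ Y₁ := subset_sdiff.2 ⟨hXY, disjoint_of_subset_right hY₁ disjoint_sdiff⟩
  obtain ⟨Y₂, hY₂, hcard₂, hQ₂⟩ :=
    hQe X hQX x hx hQxX (Y \ Y₁) (hQ sdiff_subset hQY) hXY₁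
  have hsplit : Y \ (Y₁ ∪ Y₂) = (Y \ Y₁) \ Y₂ := by
    rw [sdiff_union_distrib, Finset.sdiff_sdiff_left']
  refine ⟨Y₁ ∪ Y₂, union_subset hY₁ (hY₂.trans (sdiff_subset_sdiff sdiff_subset le_rfl)),
    (card_union_le _ _).trans (by omega), ?_, ?_⟩
  · rw [hsplit]
    exact hP (insert_subset_insert x sdiff_subset) hP₁
  · rwa [hsplit]

theorem isExtendible_zero_subset (E : Finset α) : IsExtendible 0 (· ⊆ E) := by
  intro X _ x _ hxX Y hY _
  exact ⟨∅, empty_subset _, le_rfl, by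
    simpa using insert_subset (hxX (mem_insert_self x X)) hY⟩

end Extendible

section Matching

variable {V : Type*}

theorem isLowerSet_isMatchingSet : IsLowerSet {M : Finset (Sym2 V) | IsMatchingSet M} :=
  fun _ _ hNM hM e he f hf => hM e (hNM he) f (hNM hf)

theorem IsMatchingSet.card_filter_mem_le_one [DecidableEq V] {M : Finset (Sym2 V)}
    (hM : IsMatchingSet M) (v : V) : #(M.filter (v ∈ ·)) ≤ 1 := by
  refine card_le_one.2 fun e he f hf => ?_
  rw [mem_filter] at he hf
  by_contra hef
  exact hM e he.1 f hf.1 hef v he.2 hf.2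

theorem IsMatchingSet.insert [DecidableEq V] {T : Finset (Sym2 V)} {x : Sym2 V}
    (hT : IsMatchingSet T) (hxT : ∀ e ∈ T, ∀ v ∈ x, v ∉ e) : IsMatchingSet (insert x T) := by
  intro e he f hf hef v hve
  rcases mem_insert.1 he with rfl | he <;> rcases mem_insert.1 hf with hfx | hf
  · exact absurd hfx.symm hef
  · exact hxT f hf v hve
  · exact fun hvf => hxT e he v (hfx ▸ hvf) hve
  · exact hT e he f hf hef v hve

theorem isExtendible_two_isMatchingSet [DecidableEq V] :
    IsExtendible 2 (IsMatchingSet (V := V)) := by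
  intro X _ x hx hxX Y hY _
  induction x using Sym2.ind with
  | h a b =>
  set Y' := (Y \ X).filter (fun e => a ∈ e ∨ b ∈ e)
  have hcard : #Y' ≤ 2 :=
    calc #Y' ≤ #(Y.filter (a ∈ ·) ∪ Y.filter (b ∈ ·)) := by
          refine card_le_card fun e he => ?_
          simp only [Y', mem_filter, mem_sdiff, mem_union] at he ⊢
          tauto
      _ ≤ 1 + 1 := (card_union_le _ _).trans
          (add_le_add (hY.card_filter_mem_le_one a) (hY.card_filter_mem_le_one b))
  have hX_avoid : ∀ e ∈ X, ∀ v ∈ s(a, b), v ∉ e := fun e he =>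
    hxX _ (mem_insert_self _ _) e (mem_insert_of_mem he) (fun h => hx (h ▸ he))
  have hrest_avoid : ∀ e ∈ Y \ Y', ∀ v ∈ s(a, b), v ∉ e := by
    intro e he v hv hve
    simp only [Y', mem_sdiff, mem_filter, not_and, not_or] at he
    by_cases heX : e ∈ X
    · exact hX_avoid e heX v hv hve
    · obtain ⟨hna, hnb⟩ := he.2 ⟨he.1, heX⟩
      rcases Sym2.mem_iff.1 hv with rfl | rfl <;> contradiction
  exact ⟨Y', filter_subset _ _, hcard,
    (isLowerSet_isMatchingSet sdiff_subset hY).insert hrest_avoid⟩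

end Matching

section ColorBounded

variable {β ι : Type*} [DecidableEq ι]

def IsColorBounded (c : β → ι) (w : ι → ℕ) (M : Finset β) : Prop :=
  ∀ j, #(M.filter (fun e => c e = j)) ≤ w j

theorem isLowerSet_isColorBounded (c : β → ι) (w : ι → ℕ) :
    IsLowerSet {M | IsColorBounded c w M} :=
  fun _ _ hNM hM j => (card_le_card (filter_subset_filter _ hNM)).trans (hM j)

theorem card_filter_color_insert_le [DecidableEq β] (c : β → ι) (x : β) (T : Finset β)
    (j : ι) :
    #((insert x T).filter (fun e => c e = j)) ≤
      #(T.filter (fun e => c e = j)) + if c x = j then 1 else 0 := by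
  rw [filter_insert]
  split_ifs
  · exact card_insert_le _ _
  · exact le_rfl

theorem isExtendible_one_isColorBounded [DecidableEq β] (c : β → ι) (w : ι → ℕ) :
    IsExtendible 1 (IsColorBounded c w) := by
  intro X _ x hx hxX Y hY _
  by_cases hroom : #(Y.filter (fun e => c e = c x)) < w (c x)
  · refine ⟨∅, empty_subset _, zero_le_one, fun j => ?_⟩
    rw [sdiff_empty]
    refine (card_filter_color_insert_le c x Y j).trans ?_
    split_ifs with hj
    · subst hj; omega
    · simpa using hY j
  · have hXx : #(X.filter (fun e => c e = c x)) + 1 ≤ w (c x) := by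
      simpa [filter_insert, card_insert_of_notMem (fun h => hx (mem_filter.1 h).1)]
        using hxX (c x)
    obtain ⟨d, hdYx, hdX⟩ :
        ∃ d ∈ Y.filter (fun e => c e = c x), d ∉ X.filter (fun e => c e = c x) :=
      not_subset.1 fun h => by have := card_le_card h; omega
    rw [mem_filter] at hdYx
    have hd_notMem_X : d ∉ X := fun h => hdX (mem_filter.2 ⟨h, hdYx.2⟩)
    refine ⟨{d}, singleton_subset_iff.2 (mem_sdiff.2 ⟨hdYx.1, hd_notMem_X⟩), le_rfl, fun j => ?_⟩
    refine (card_filter_color_insert_le c x _ j).trans ?_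
    split_ifs with hj
    · subst hj
      have hdrop : #((Y \ {d}).filter (fun e => c e = c x)) + 1 =
          #(Y.filter (fun e => c e = c x)) := by
        rw [sdiff_singleton_eq_erase, filter_erase, card_erase_add_one (mem_filter.2 hdYx)]
      have := hY (c x)
      omega
    · simpa using (isLowerSet_isColorBounded c w sdiff_subset hY) j

end ColorBounded

theorem boundedColorMatching_downClosed_and_threeExtendible_general
    {V : Type*} [Fintype V] [DecidableEq V]
    (G : SimpleGraph V) [DecidableRel G.Adj]
    (k : ℕ) (c : Sym2 V → Fin k) (w : Fin k → ℕ)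
    (𝓛 : Finset (Sym2 V) → Prop)
    (h𝓛 : ∀ M, 𝓛 M ↔ (M ⊆ G.edgeFinset ∧ IsMatchingSet M ∧
      ∀ j, (M.filter (fun e => c e = j)).card ≤ w j)) :
    (∀ X, 𝓛 X → ∀ Y ⊆ X, 𝓛 Y) ∧
    (∀ X, 𝓛 X → ∀ x ∉ X, 𝓛 (insert x X) → ∀ Y, 𝓛 Y → X ⊆ Y →
      ∃ Y' ⊆ Y \ X, Y'.card ≤ 3 ∧ 𝓛 (insert x (Y \ Y'))) := by
  obtain rfl : 𝓛 = fun M => M ⊆ G.edgeFinset ∧ IsMatchingSet M ∧ IsColorBounded c w M :=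
    funext fun M => propext (h𝓛 M)
  have hlower_color := isLowerSet_isColorBounded c w
  have hlower_matching_color := isLowerSet_isMatchingSet.inter hlower_color
  refine ⟨fun X hX Y hYX => ((isLowerSet_Iic _).inter hlower_matching_color) hYX hX, ?_⟩
  exact (isExtendible_zero_subset _).and (isLowerSet_Iic _) hlower_matching_color
    (isExtendible_two_isMatchingSet.and isLowerSet_isMatchingSet hlower_color
      (isExtendible_one_isColorBounded c w))

/-- The subset system of the Bounded Color Matching problem — the sets of edges that are
matchings of `G` using at most `w j` edges of each color `j` — is closed under taking
subsets and is 3-extendible. -/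
theorem boundedColorMatching_downClosed_and_threeExtendible
    {V : Type*} [Fintype V] [DecidableEq V]
    (G : SimpleGraph V) [DecidableRel G.Adj]
    (k : ℕ) (c : Sym2 V → Fin k) (w : Fin k → ℕ) (hw : ∀ j, 1 ≤ w j)
    (𝓛 : Finset (Sym2 V) → Prop)
    (h𝓛 : ∀ M, 𝓛 M ↔ (M ⊆ G.edgeFinset ∧ IsMatchingSet M ∧
      ∀ j, (M.filter (fun e => c e = j)).card ≤ w j)) :
    (∀ X, 𝓛 X → ∀ Y ⊆ X, 𝓛 Y) ∧
    (∀ X, 𝓛 X → ∀ x ∉ X, 𝓛 (insert x X) → ∀ Y, 𝓛 Y → X ⊆ Y →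
      ∃ Y' ⊆ Y \ X, Y'.card ≤ 3 ∧ 𝓛 (insert x (Y \ Y'))) :=
  boundedColorMatching_downClosed_and_threeExtendible_general G k c w 𝓛 h𝓛
end

section
/- Let G = (V, E) be a finite simple bipartite graph with nonempty edge set, edge colors, and integer color bounds w_j ≥ 1, and let x : E → (0, 1] satisfy Σ_{e∈δ(v)} x_e ≤ 1 for all v ∈ V and Σ_{e∈E_j} x_e ≤ w_j for all colors j. Suppose there exist a set F ⊆ V with Σ_{e∈δ(v)} x_e = 1 for all v ∈ F and a set Q of colors with Σ_{e∈E_j} x_e = w_j for all j ∈ Q, such that |E| = |F| + |Q| and the characteristic vectors {χ_{δ(v)}}_{v∈F} ∪ {χ_{E_j}}_{j∈Q} are linearly independent in ℝ^E. Then |E| < 3 · Σ_{e∈E} x_e. -/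
/-- A graph is bipartite if there is a set of vertices such that every edge has exactly
one endpoint inside it. -/
def IsBipartiteGraph {V : Type*} (G : SimpleGraph V) : Prop :=
  ∃ A : Set V, ∀ ⦃u v : V⦄, G.Adj u v → (u ∈ A ↔ v ∉ A)

/-- The characteristic vector of a finite set of edges, viewed in `ℝ^E`. -/
def chiVec {α : Type*} [DecidableEq α] (A : Finset α) : α → ℝ :=
  fun e => if e ∈ A then 1 else 0

/-!
Double counting the tight constraints gives
`|E| = |F| + |Q| ≤ |F| + ∑_{j ∈ Q} w_j = ∑_e (|e ∩ F| + [c e ∈ Q]) x_e ≤ 3 ∑_e x_e`,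
since an edge has two endpoints and one color. Equality would force every edge to have both
endpoints in `F`; but then, for a bipartition `(A, B)`, the vectors `χ_{δ(v)}` with `v ∈ F ∩ A`
and those with `v ∈ F ∩ B` both sum to `χ_E`, contradicting linear independence.
-/

open Finset

section DoubleCounting

variable {α β : Type*} (S : Finset β) (E : Finset α) (p : β → α → Prop)
  [∀ s e, Decidable (p s e)] (x : α → ℝ)

theorem sum_sum_filter_eq_sum_card_filter_mul :
    ∑ s ∈ S, ∑ e ∈ E with p s e, x e = ∑ e ∈ E, (#{s ∈ S | p s e} : ℝ) * x e := by
  simp only [sum_filter]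
  rw [sum_comm]
  refine sum_congr rfl fun e _ => ?_
  rw [← sum_filter, sum_const, nsmul_eq_mul]

theorem card_le_sum_card_filter_mul (h : ∀ s ∈ S, 1 ≤ ∑ e ∈ E with p s e, x e) :
    (#S : ℝ) ≤ ∑ e ∈ E, (#{s ∈ S | p s e} : ℝ) * x e := by
  rw [← sum_sum_filter_eq_sum_card_filter_mul, card_eq_sum_ones, Nat.cast_sum, Nat.cast_one]
  exact sum_le_sum h

end DoubleCounting

section Sym2

variable {V : Type*} [DecidableEq V] (F : Finset V)

theorem card_filter_mem_sym2_le_two (e : Sym2 V) : #{v ∈ F | v ∈ e} ≤ 2 := by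
  induction e using Sym2.ind with
  | _ a b =>
    refine (card_le_card fun v hv => ?_).trans (card_le_two (a := a) (b := b))
    simpa [Sym2.mem_iff] using (mem_filter.1 hv).2

theorem card_filter_mem_sym2_le_one_of_notMem {e : Sym2 V} {v : V} (hv : v ∈ e) (hvF : v ∉ F) :
    #{u ∈ F | u ∈ e} ≤ 1 := by
  obtain ⟨w, rfl⟩ := Sym2.mem_iff_exists.1 hv
  refine (card_le_card fun u hu => ?_).trans (card_singleton w).le
  obtain ⟨huF, hu⟩ := mem_filter.1 hu
  rcases Sym2.mem_iff.1 hu with rfl | rfl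
  · exact absurd huF hvF
  · exact mem_singleton_self u

end Sym2

theorem card_filter_eq_le_one {ι κ : Type*} [DecidableEq κ] (Q : Finset κ) (f : ι → κ) (e : ι) :
    #{j ∈ Q | f e = j} ≤ 1 :=
  card_le_one.2 fun _ hi _ hj => (mem_filter.1 hi).2.symm.trans (mem_filter.1 hj).2

section Bipartite

variable {V : Type*} [Fintype V] [DecidableEq V] {G : SimpleGraph V} [DecidableRel G.Adj]

theorem sum_sign_smul_chiVec_incidence_eq_zero {A : Set V} [DecidablePred (· ∈ A)]
    (hA : ∀ ⦃u v : V⦄, G.Adj u v → (u ∈ A ↔ v ∉ A)) :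
    ∑ v, (if v ∈ A then 1 else -1 : ℝ) • chiVec {e ∈ G.edgeFinset | v ∈ e} = 0 := by
  funext e
  simp only [Finset.sum_apply, Pi.smul_apply, smul_eq_mul, chiVec, mem_filter, Pi.zero_apply]
  by_cases he : e ∈ G.edgeFinset
  · induction e using Sym2.ind with
    | _ u w =>
      have hadj : G.Adj u w := by simpa using he
      simp only [he, true_and, mul_ite, mul_one, mul_zero]
      rw [← sum_filter, show ({v | v ∈ s(u, w)} : Finset V) = {u, w} by ext; simp,
        sum_pair (G.ne_of_adj hadj)]
      by_cases hu : u ∈ A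
      · simp [hu, (hA hadj).1 hu]
      · simp [hu, not_not.1 (mt (hA hadj).2 hu)]
  · simp [he]

theorem IsBipartiteGraph.exists_edge_endpoint_notMem (hbip : IsBipartiteGraph G)
    (hne : G.edgeFinset.Nonempty) {F : Finset V}
    (hF : LinearIndependent ℝ (fun v : F => chiVec {e ∈ G.edgeFinset | (v : V) ∈ e})) :
    ∃ e ∈ G.edgeFinset, ∃ v ∈ e, v ∉ F := by
  classical
  obtain ⟨A, hA⟩ := hbip
  by_contra! hcover
  let sign : V → ℝ := fun v => if v ∈ A then 1 else -1
  have hsum : ∑ v : F, sign v • chiVec {e ∈ G.edgeFinset | (v : V) ∈ e} = 0 := by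
    rw [sum_coe_sort F fun v => sign v • chiVec {e ∈ G.edgeFinset | v ∈ e},
      sum_subset (subset_univ F), sum_sign_smul_chiVec_incidence_eq_zero hA]
    intro u _ hu
    have : chiVec {e ∈ G.edgeFinset | u ∈ e} = 0 := by
      funext e
      simp only [chiVec, mem_filter, Pi.zero_apply, ite_eq_right_iff, and_imp]
      exact fun he hue => absurd (hcover e he u hue) hu
    rw [this, smul_zero]
  obtain ⟨e, he⟩ := hne
  have hv := hcover e he e.out.1 (Sym2.out_fst_mem e)
  have := Fintype.linearIndependent_iff.1 hF (fun v => sign v) hsum ⟨_, hv⟩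
  simp only [sign] at this
  split_ifs at this <;> norm_num at this

end Bipartite

theorem support_card_lt_three_opt_bipartite_general {V : Type*} [Fintype V] [DecidableEq V]
    (G : SimpleGraph V) [DecidableRel G.Adj]
    (hbip : IsBipartiteGraph G) (hne : G.edgeFinset.Nonempty)
    (k : ℕ) (c : Sym2 V → Fin k) (w : Fin k → ℕ) (hw : ∀ j, 1 ≤ w j)
    (x : Sym2 V → ℝ) (hx : ∀ e ∈ G.edgeFinset, 0 < x e ∧ x e ≤ 1)
    (F : Finset V)
    (hF : ∀ v ∈ F, ∑ e ∈ G.edgeFinset.filter (fun e => v ∈ e), x e = 1)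
    (Q : Finset (Fin k))
    (hQtight : ∀ j ∈ Q, ∑ e ∈ G.edgeFinset.filter (fun e => c e = j), x e = (w j : ℝ))
    (hcount : G.edgeFinset.card = F.card + Q.card)
    (hindep : LinearIndependent ℝ (Sum.elim
      (fun v : F => chiVec (G.edgeFinset.filter (fun e => (v : V) ∈ e)))
      (fun j : Q => chiVec (G.edgeFinset.filter (fun e => c e = (j : Fin k)))))) :
    (G.edgeFinset.card : ℝ) < 3 * ∑ e ∈ G.edgeFinset, x e := by
  obtain ⟨e₀, he₀, v₀, hv₀, hv₀F⟩ :=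
    hbip.exists_edge_endpoint_notMem hne (hindep.comp Sum.inl Sum.inl_injective)
  have hFcard := card_le_sum_card_filter_mul F G.edgeFinset (fun v e => v ∈ e) x
    fun v hv => (hF v hv).ge
  have hQcard := card_le_sum_card_filter_mul Q G.edgeFinset (fun j e => c e = j) x
    fun j hj => by rw [hQtight j hj]; exact_mod_cast hw j
  have hcoef (e : Sym2 V) : (#{v ∈ F | v ∈ e} + #{j ∈ Q | c e = j} : ℝ) ≤ 3 := by
    have := card_filter_mem_sym2_le_two F e
    have := card_filter_eq_le_one Q c e
    exact_mod_cast (by omega : #{v ∈ F | v ∈ e} + #{j ∈ Q | c e = j} ≤ 3)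
  have hcoef₀ : (#{v ∈ F | v ∈ e₀} + #{j ∈ Q | c e₀ = j} : ℝ) < 3 := by
    have := card_filter_mem_sym2_le_one_of_notMem F hv₀ hv₀F
    have := card_filter_eq_le_one Q c e₀
    exact_mod_cast (by omega : #{v ∈ F | v ∈ e₀} + #{j ∈ Q | c e₀ = j} < 3)
  calc (G.edgeFinset.card : ℝ) = #F + #Q := by exact_mod_cast hcount
    _ ≤ ∑ e ∈ G.edgeFinset, (#{v ∈ F | v ∈ e} + #{j ∈ Q | c e = j} : ℝ) * x e := by
      simp only [add_mul, sum_add_distrib]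
      exact add_le_add hFcard hQcard
    _ < ∑ e ∈ G.edgeFinset, 3 * x e :=
      sum_lt_sum (fun e he => mul_le_mul_of_nonneg_right (hcoef e) (hx e he).1.le)
        ⟨e₀, he₀, mul_lt_mul_of_pos_right hcoef₀ (hx e₀ he₀).1⟩
    _ = 3 * ∑ e ∈ G.edgeFinset, x e := (mul_sum _ _ _).symm

/-- Support-size bound for basic feasible solutions on bipartite graphs: if
`x : E → (0,1]` satisfies the degree and color constraints, `F` is a set of tight
vertices and `Q` a set of tight colors with `|E| = |F| + |Q|` and the corresponding
characteristic vectors linearly independent, then `|E| < 3 · ∑_{e ∈ E} x_e`. -/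
theorem support_card_lt_three_opt_bipartite {V : Type*} [Fintype V] [DecidableEq V]
    (G : SimpleGraph V) [DecidableRel G.Adj]
    (hbip : IsBipartiteGraph G) (hne : G.edgeFinset.Nonempty)
    (k : ℕ) (c : Sym2 V → Fin k) (w : Fin k → ℕ) (hw : ∀ j, 1 ≤ w j)
    (x : Sym2 V → ℝ) (hx : ∀ e ∈ G.edgeFinset, 0 < x e ∧ x e ≤ 1)
    (hdeg : ∀ v : V, ∑ e ∈ G.edgeFinset.filter (fun e => v ∈ e), x e ≤ 1)
    (hcol : ∀ j : Fin k, ∑ e ∈ G.edgeFinset.filter (fun e => c e = j), x e ≤ (w j : ℝ))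
    (F : Finset V)
    (hF : ∀ v ∈ F, ∑ e ∈ G.edgeFinset.filter (fun e => v ∈ e), x e = 1)
    (Q : Finset (Fin k))
    (hQtight : ∀ j ∈ Q, ∑ e ∈ G.edgeFinset.filter (fun e => c e = j), x e = (w j : ℝ))
    (hcount : G.edgeFinset.card = F.card + Q.card)
    (hindep : LinearIndependent ℝ (Sum.elim
      (fun v : F => chiVec (G.edgeFinset.filter (fun e => (v : V) ∈ e)))
      (fun j : Q => chiVec (G.edgeFinset.filter (fun e => c e = (j : Fin k)))))) :
    (G.edgeFinset.card : ℝ) < 3 * ∑ e ∈ G.edgeFinset, x e :=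
  support_card_lt_three_opt_bipartite_general G hbip hne k c w hw x hx F hF Q hQtight hcount hindep
end
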